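/- Let (𝒜, A, A') be a quasi-twilled associative algebra over a field K with projection p : 𝒜 → A determined by the decomposition 𝒜 = A ⊕ A', and let D : A → A' be a linear map such that the graph {x + D(x) : x ∈ A} is closed under the multiplication of 𝒜 (i.e., D is a right deformation map). Then the bilinear operation π^D on A defined by π^D(x,y) = p((x + D(x))·(y + D(y))) is associative, i.e., (A, π^D) is an associative algebra. -/

import Mathlib

/-- `π^D(x,y) = p((x + D(x))·(y + D(y)))`, where `p` is the projection onto `A`
along `A'`. -/
noncomputable def piD {K 𝓐 : Type*} [Field K] [AddCommGroup 𝓐] [Module K 𝓐]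
    (m : 𝓐 →ₗ[K] 𝓐 →ₗ[K] 𝓐)
    {A A' : Submodule K 𝓐} (hcompl : IsCompl A A') (D : A →ₗ[K] A') (x y : A) : A :=
  A.linearProjOfIsCompl A' hcompl
    (m ((x : 𝓐) + ((D x : A') : 𝓐)) ((y : 𝓐) + ((D y : A') : 𝓐)))

/-!
Since the graph of `D` is closed under the product, `m (x + D x) (y + D y)` is itself of the
form `z + D z`, and `z` is its projection `π^D(x, y)`. Thus `x ↦ x + D x` is multiplicative from
`(A, π^D)` to `𝒜`, and `π^D` inherits associativity from `m` by projecting both ways of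
bracketing `(x + D x)(y + D y)(z + D z)` back to `A`.
-/

section

variable {K 𝓐 : Type*} [Field K] [AddCommGroup 𝓐] [Module K 𝓐] (m : 𝓐 →ₗ[K] 𝓐 →ₗ[K] 𝓐)
  {A A' : Submodule K 𝓐} (hcompl : IsCompl A A') (D : A →ₗ[K] A')

theorem piD_eq_of_mul_eq_graph {x y z : A}
    (hz : m ((x : 𝓐) + ((D x : A') : 𝓐)) ((y : 𝓐) + ((D y : A') : 𝓐))
      = (z : 𝓐) + ((D z : A') : 𝓐)) :
    piD m hcompl D x y = z := by
  have hproj : A.projectionOnto A' hcompl ((z : 𝓐) + ((D z : A') : 𝓐)) = z := by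
    rw [map_add, Submodule.projectionOnto_apply_left, Submodule.projectionOnto_apply_right,
      add_zero]
  rw [piD, hz]
  exact hproj

theorem graph_piD_eq_mul
    (hgr : ∀ x y : A, ∃ z : A,
      m ((x : 𝓐) + ((D x : A') : 𝓐)) ((y : 𝓐) + ((D y : A') : 𝓐))
        = (z : 𝓐) + ((D z : A') : 𝓐)) (x y : A) :
    ((piD m hcompl D x y : A) : 𝓐) + ((D (piD m hcompl D x y) : A') : 𝓐)
      = m ((x : 𝓐) + ((D x : A') : 𝓐)) ((y : 𝓐) + ((D y : A') : 𝓐)) := by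
  obtain ⟨z, hz⟩ := hgr x y
  rw [piD_eq_of_mul_eq_graph m hcompl D hz, hz]

end

theorem stmt11 {K 𝓐 : Type*} [Field K] [AddCommGroup 𝓐] [Module K 𝓐]
    (m : 𝓐 →ₗ[K] 𝓐 →ₗ[K] 𝓐)
    (assoc : ∀ a b c : 𝓐, m (m a b) c = m a (m b c))
    (A A' : Submodule K 𝓐) (hcompl : IsCompl A A')
    (D : A →ₗ[K] A')
    (hgr : ∀ x y : A, ∃ z : A,
      m ((x : 𝓐) + ((D x : A') : 𝓐)) ((y : 𝓐) + ((D y : A') : 𝓐))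
        = (z : 𝓐) + ((D z : A') : 𝓐)) :
    ∀ x y z : A,
      piD m hcompl D (piD m hcompl D x y) z = piD m hcompl D x (piD m hcompl D y z) := by
  intro x y z
  have hgraph := graph_piD_eq_mul m hcompl D hgr
  rw [piD.eq_1 m hcompl D (piD m hcompl D x y), piD.eq_1 m hcompl D x (piD m hcompl D y z),
    hgraph x y, hgraph y z, assoc]
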